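/- arXiv:1902.06179 — 10 statements merged into one kernel-verified Lean document; each statement's English description precedes it below -/
import Mathlib

section
/- Let f be a submodular set function on a finite ground set U, let A ⊆ U be a finset, and let o_0, …, o_{l−1} be pairwise distinct elements of U \ A with prefixes Ô_0 = ∅ and Ô_i = {o_0, …, o_{i−1}} for 1 ≤ i ≤ l. Suppose that for each i < l a finset S_i ⊆ A is given. Then f(Ô_l ∪ A) − f(A) ≤ Σ_{i=0}^{l−1} f_{o_i}(S_i), where f_x(S) := f(S ∪ {x}) − f(S) denotes the marginal gain. -/
/-!
Telescope `f (Ô_l ∪ A) - f A` along the chain `Ô_i ∪ A`: the `i`-th increment is the marginal gain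
of `o_i` at `Ô_i ∪ A`, a superset of `S_i` not containing `o_i`, so by diminishing returns it is at
most the marginal gain of `o_i` at `S_i`.
-/

open Finset

theorem Finset.marginal_le_marginal_of_submodular {α G : Type*} [DecidableEq α] [AddCommGroup G]
    [PartialOrder G] [IsOrderedAddMonoid G] {f : Finset α → G}
    (hf : ∀ A B : Finset α, f (A ∪ B) + f (A ∩ B) ≤ f A + f B)
    {S T : Finset α} {x : α} (hST : S ⊆ T) (hx : x ∉ T) :
    f (insert x T) - f T ≤ f (insert x S) - f S := by
  have h := hf (insert x S) T
  rw [insert_union, union_eq_right.mpr hST, insert_inter_of_notMem hx,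
    inter_eq_left.mpr hST] at h
  exact sub_le_sub_iff.mpr h

theorem greedy_telescoping_bound_general
    {U : Type*} [DecidableEq U] (f : Finset U → ℝ)
    (hsub : ∀ A B : Finset U, f (A ∪ B) + f (A ∩ B) ≤ f A + f B)
    (A : Finset U) (l : ℕ) (o : ℕ → U) (S : ℕ → Finset U)
    (ho_notin : ∀ i < l, o i ∉ A)
    (ho_inj : ∀ i < l, ∀ j < l, i ≠ j → o i ≠ o j)
    (hS : ∀ i < l, S i ⊆ A) :
    f ((Finset.range l).image o ∪ A) - f A ≤
      ∑ i ∈ Finset.range l, (f (insert (o i) (S i)) - f (S i)) := by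
  have htelescope := sum_range_sub (fun i => f ((range i).image o ∪ A)) l
  simp only [range_zero, image_empty, empty_union] at htelescope
  rw [← htelescope]
  refine sum_le_sum fun i hi => ?_
  rw [mem_range] at hi
  have hfresh : o i ∉ (range i).image o ∪ A := by
    simp only [mem_union, mem_image, mem_range, not_or, not_exists, not_and]
    exact ⟨fun j hj => ho_inj j (hj.trans hi) i hi hj.ne, ho_notin i hi⟩
  rw [range_add_one, image_insert, insert_union]
  exact marginal_le_marginal_of_submodular hsub ((hS i hi).trans subset_union_right) hfresh

theorem greedy_telescoping_bound
    {U : Type*} [Fintype U] [DecidableEq U] (f : Finset U → ℝ)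
    (hsub : ∀ A B : Finset U, f (A ∪ B) + f (A ∩ B) ≤ f A + f B)
    (A : Finset U) (l : ℕ) (o : ℕ → U) (S : ℕ → Finset U)
    (ho_notin : ∀ i < l, o i ∉ A)
    (ho_inj : ∀ i < l, ∀ j < l, i ≠ j → o i ≠ o j)
    (hS : ∀ i < l, S i ⊆ A) :
    f ((Finset.range l).image o ∪ A) - f A ≤
      ∑ i ∈ Finset.range l, (f (insert (o i) (S i)) - f (S i)) :=
  greedy_telescoping_bound_general f hsub A l o S ho_notin ho_inj hS
end

section
/- Let f be a nonnegative submodular set function on a finite ground set U, let k ≥ 1, and let (a_i), (b_i), (A_i), (B_i) form an interlaced greedy trace of length k for f. Let c be any real number with c ≥ f(A_i) and c ≥ f(B_i) for all 0 ≤ i ≤ k. Then for every finset O ⊆ U with |O| ≤ k, it holds that 4c ≥ f(O \ {a_0}). -/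
/-!
Let `A_k` and `B_k` be the two greedy sets and `O' = O \ {a₀}`. Submodularity splits
`f (O' ∪ A_k) ≤ f A_k + ∑_{o ∈ O' \ A_k} f_o(A_k)`. Each such `o` is still available to the
`A`-greedy up to the step where the `B`-greedy takes it, so the marginal gains can be matched
injectively to greedy gains `f_{a_i}(A_i)` with `i < |O' \ A_k|`, which telescope to at most `c`;
hence `f (O' ∪ A_k) ≤ 2c`. The same works for `B_k`, where removing `a₀` is what keeps every
`o` available to the `B`-greedy one step longer than to the `A`-greedy. As `A_k ∩ B_k = ∅`,
submodularity and nonnegativity give `f O' ≤ f (O' ∪ A_k) + f (O' ∪ B_k) ≤ 4c`.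
-/

open Finset

section Matching

variable {ι : Type*} [DecidableEq ι]

/-- `hall` is Hall's condition for matching each `o ∈ T` to its own index in `[0, d o]`. -/
lemma sum_le_sum_range_of_card_filter_le {M : Type*} [AddCommMonoid M]
    [PartialOrder M] [IsOrderedAddMonoid M] (T : Finset ι) (d : ι → ℕ) (v : ι → M) (g : ℕ → M)
    (hall : ∀ t, #{o ∈ T | d o ≤ t} ≤ t + 1)
    (hvg : ∀ o ∈ T, ∀ i ≤ d o, i < #T → v o ≤ g i) :
    ∑ o ∈ T, v o ≤ ∑ i ∈ range #T, g i := by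
  induction T using Finset.induction_on_max_value d with
  | empty => simp
  | insert o₀ T ho₀ hmax ih =>
    have hcard : #T ≤ d o₀ := by
      have := hall (d o₀)
      rw [filter_true_of_mem (by simpa using hmax), card_insert_of_notMem ho₀] at this
      omega
    rw [sum_insert ho₀, card_insert_of_notMem ho₀, sum_range_succ, add_comm]
    refine add_le_add (ih (fun t => ?_) fun o ho i hi hiT => ?_) ?_
    · exact (card_le_card (filter_subset_filter _ (subset_insert _ _))).trans (hall t)
    · exact hvg o (mem_insert_of_mem ho) i hi (by rw [card_insert_of_notMem ho₀]; omega)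
    · exact hvg o₀ (mem_insert_self _ _) #T hcard (by rw [card_insert_of_notMem ho₀]; omega)

/-- The first index `j < m` with `e j = o`, or `m` if there is none. -/
def firstHit (m : ℕ) (e : ℕ → ι) (o : ι) : ℕ :=
  Nat.find (⟨m, Or.inl le_rfl⟩ : ∃ j, m ≤ j ∨ e j = o)

variable {m : ℕ} {e : ℕ → ι} {o : ι}

lemma apply_firstHit (h : firstHit m e o < m) : e (firstHit m e o) = o :=
  (Nat.find_spec (⟨m, Or.inl le_rfl⟩ : ∃ j, m ≤ j ∨ e j = o)).resolve_left (by
    unfold firstHit at h; omega)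

lemma apply_ne_of_lt_firstHit {j : ℕ} (h : j < firstHit m e o) : e j ≠ o :=
  fun hj => Nat.find_min _ h (Or.inr hj)

lemma card_filter_firstHit_le {T : Finset ι} (hT : #T ≤ m + 1) (t : ℕ) :
    #{o ∈ T | firstHit m e o ≤ t} ≤ t + 1 := by
  rcases le_or_gt m t with hmt | htm
  · exact (card_filter_le _ _).trans (by omega)
  · calc #{o ∈ T | firstHit m e o ≤ t}
        ≤ #(range (t + 1)) := card_le_card_of_injOn (firstHit m e)
          (fun o ho => by
            simp only [coe_filter, Set.mem_ofPred_eq, coe_range, Set.mem_Iio] at ho ⊢; omega)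
          (fun x hx y hy hxy => by
            simp only [coe_filter, Set.mem_ofPred_eq] at hx hy
            rw [← apply_firstHit (hx.2.trans_lt htm), ← apply_firstHit (hy.2.trans_lt htm), hxy])
      _ = t + 1 := card_range _

end Matching

section Submodular

variable {U : Type*} [DecidableEq U]

def IsSubmodular (f : Finset U → ℝ) : Prop :=
  ∀ A B : Finset U, f (A ∪ B) + f (A ∩ B) ≤ f A + f B

/-- The marginal gain `f_x(A)`. -/
def marginal (f : Finset U → ℝ) (x : U) (A : Finset U) : ℝ :=
  f (insert x A) - f A

variable {f : Finset U → ℝ}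

lemma IsSubmodular.marginal_anti (hf : IsSubmodular f) {x : U} {A B : Finset U} (hAB : A ⊆ B)
    (hx : x ∉ B) : marginal f x B ≤ marginal f x A := by
  have h := hf (insert x A) B
  rw [insert_union, union_eq_right.2 hAB, insert_inter_of_notMem hx, inter_eq_left.2 hAB] at h
  unfold marginal
  linarith

lemma IsSubmodular.le_add_sum_marginal (hf : IsSubmodular f) {S T : Finset U}
    (hST : Disjoint S T) : f (S ∪ T) ≤ f S + ∑ o ∈ T, marginal f o S := by
  induction T using Finset.induction_on with
  | empty => simp
  | insert t T ht ih =>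
    rw [disjoint_insert_right] at hST
    have hanti := hf.marginal_anti (x := t) (subset_union_left : S ⊆ S ∪ T)
      (by simp only [mem_union, not_or]; exact ⟨hST.1, ht⟩)
    rw [union_insert, sum_insert ht]
    have := ih hST.2
    unfold marginal at hanti this ⊢
    linarith

lemma sum_marginal_image_range (f : Finset U → ℝ) (e : ℕ → U) (n : ℕ) :
    ∑ i ∈ range n, marginal f (e i) ((range i).image e) = f ((range n).image e) - f ∅ := by
  simpa only [marginal, range_add_one, image_insert, range_zero, image_empty] using
    sum_range_sub (fun i => f ((range i).image e)) n

lemma IsSubmodular.image_range_union_le (hf : IsSubmodular f) (e : ℕ → U) {k : ℕ}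
    {T : Finset U} (hTk : #T ≤ k) (hT : Disjoint ((range k).image e) T) (d : U → ℕ)
    (hall : ∀ t, #{o ∈ T | d o ≤ t} ≤ t + 1)
    (hgreedy : ∀ o ∈ T, ∀ i ≤ d o, i < k →
      marginal f o ((range i).image e) ≤ marginal f (e i) ((range i).image e)) :
    f ((range k).image e ∪ T) ≤ f ((range k).image e) + (f ((range #T).image e) - f ∅) := by
  calc f ((range k).image e ∪ T)
      ≤ f ((range k).image e) + ∑ o ∈ T, marginal f o ((range k).image e) :=
        hf.le_add_sum_marginal hT
    _ ≤ f ((range k).image e) + ∑ i ∈ range #T, marginal f (e i) ((range i).image e) := by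
        refine add_le_add le_rfl (sum_le_sum_range_of_card_filter_le (M := ℝ) T d _ _ hall ?_)
        intro o ho i hi hiT
        exact (hf.marginal_anti (image_subset_image (range_subset_range.2 (by omega)))
          (disjoint_right.1 hT ho)).trans (hgreedy o ho i hi (by omega))
    _ = _ := by rw [sum_marginal_image_range]

variable {a b : ℕ → U} {k : ℕ}

lemma IsSubmodular.union_greedy_fst_le (hf : IsSubmodular f)
    (hgreedy : ∀ i < k, ∀ x : U, x ∉ (range i).image a ∪ (range i).image b →
      marginal f x ((range i).image a) ≤ marginal f (a i) ((range i).image a))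
    {O : Finset U} (hO : #O ≤ k) :
    ∃ j ≤ k, f (O ∪ (range k).image a) ≤
      f ((range k).image a) + (f ((range j).image a) - f ∅) := by
  have hT : #(O \ (range k).image a) ≤ k := (card_le_card sdiff_subset).trans hO
  refine ⟨_, hT, ?_⟩
  rw [union_comm, ← union_sdiff_self_eq_union]
  refine hf.image_range_union_le a hT disjoint_sdiff (firstHit (k - 1) b)
    (card_filter_firstHit_le (by omega)) fun o ho i hi hik => hgreedy i hik o ?_
  have hA := (mem_sdiff.1 ho).2
  simp only [mem_union, mem_image, mem_range, not_or, not_exists, not_and]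
  exact ⟨fun j hj hj' => hA (mem_image.2 ⟨j, mem_range.2 (by omega), hj'⟩),
    fun j hj => apply_ne_of_lt_firstHit (m := k - 1) (by omega)⟩

lemma IsSubmodular.union_greedy_snd_le (hf : IsSubmodular f)
    (hgreedy : ∀ i < k, ∀ x : U, x ∉ (range (i + 1)).image a ∪ (range i).image b →
      marginal f x ((range i).image b) ≤ marginal f (b i) ((range i).image b))
    {O : Finset U} (hO : #O ≤ k) (ha₀ : a 0 ∉ O) :
    ∃ j ≤ k, f (O ∪ (range k).image b) ≤
      f ((range k).image b) + (f ((range j).image b) - f ∅) := by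
  have hT : #(O \ (range k).image b) ≤ k := (card_le_card sdiff_subset).trans hO
  refine ⟨_, hT, ?_⟩
  rw [union_comm, ← union_sdiff_self_eq_union]
  refine hf.image_range_union_le b hT disjoint_sdiff (firstHit (k - 1) (fun j => a (j + 1)))
    (card_filter_firstHit_le (by omega)) fun o ho i hi hik => hgreedy i hik o ?_
  obtain ⟨hoO, hB⟩ := mem_sdiff.1 ho
  simp only [mem_union, mem_image, mem_range, not_or, not_exists, not_and]
  refine ⟨fun j hj hj' => ?_, fun j hj hj' => hB (mem_image.2 ⟨j, mem_range.2 (by omega), hj'⟩)⟩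
  rcases j with _ | j
  · exact ha₀ (hj' ▸ hoO)
  · exact apply_ne_of_lt_firstHit (m := k - 1) (e := fun j => a (j + 1)) (by omega) hj'

end Submodular

theorem interlace_greedy_minus_general
    {U : Type*} [DecidableEq U] (f : Finset U → ℝ)
    (hsub : ∀ A B : Finset U, f (A ∪ B) + f (A ∩ B) ≤ f A + f B)
    (hnn : ∀ A : Finset U, 0 ≤ f A)
    (k : ℕ) (a b : ℕ → U)
    (hab : ∀ i < k, ∀ j < k, a i ≠ b j)
    (hgreedyA : ∀ i < k, ∀ x : U,
      x ∉ (Finset.range i).image a ∪ (Finset.range i).image b →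
      f (insert (a i) ((Finset.range i).image a)) - f ((Finset.range i).image a) ≥
        f (insert x ((Finset.range i).image a)) - f ((Finset.range i).image a))
    (hgreedyB : ∀ i < k, ∀ x : U,
      x ∉ (Finset.range (i+1)).image a ∪ (Finset.range i).image b →
      f (insert (b i) ((Finset.range i).image b)) - f ((Finset.range i).image b) ≥
        f (insert x ((Finset.range i).image b)) - f ((Finset.range i).image b))
    (c : ℝ)
    (hcA : ∀ i ≤ k, f ((Finset.range i).image a) ≤ c)
    (hcB : ∀ i ≤ k, f ((Finset.range i).image b) ≤ c) :
    ∀ O : Finset U, O.card ≤ k → 4 * c ≥ f (O \ {a 0}) := by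
  intro O hO
  have hf : IsSubmodular f := hsub
  set O' := O \ {a 0}
  have hO' : #O' ≤ k := (card_le_card sdiff_subset).trans hO
  obtain ⟨i, hik, hA⟩ := hf.union_greedy_fst_le hgreedyA hO'
  obtain ⟨j, hjk, hB⟩ := hf.union_greedy_snd_le hgreedyB hO' (by simp [O'])
  have hdisj : Disjoint ((range k).image a) ((range k).image b) := by
    simp only [disjoint_left, mem_image, mem_range, not_exists, not_and]
    rintro _ ⟨i, hi, rfl⟩ j hj
    exact (hab i hi j hj).symm
  have hcap := hsub (O' ∪ (range k).image a) (O' ∪ (range k).image b)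
  rw [← union_inter_distrib_left, disjoint_iff_inter_eq_empty.1 hdisj, union_empty] at hcap
  linarith [hcA k le_rfl, hcA i hik, hcB k le_rfl, hcB j hjk, hnn ∅,
    hnn (O' ∪ (range k).image a ∪ (O' ∪ (range k).image b))]

theorem interlace_greedy_minus
    {U : Type*} [Fintype U] [DecidableEq U] (f : Finset U → ℝ)
    (hsub : ∀ A B : Finset U, f (A ∪ B) + f (A ∩ B) ≤ f A + f B)
    (hnn : ∀ A : Finset U, 0 ≤ f A)
    (k : ℕ) (hk : 1 ≤ k) (a b : ℕ → U)
    (ha_inj : ∀ i < k, ∀ j < k, i ≠ j → a i ≠ a j)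
    (hb_inj : ∀ i < k, ∀ j < k, i ≠ j → b i ≠ b j)
    (hab : ∀ i < k, ∀ j < k, a i ≠ b j)
    (hgreedyA : ∀ i < k, ∀ x : U,
      x ∉ (Finset.range i).image a ∪ (Finset.range i).image b →
      f (insert (a i) ((Finset.range i).image a)) - f ((Finset.range i).image a) ≥
        f (insert x ((Finset.range i).image a)) - f ((Finset.range i).image a))
    (hgreedyB : ∀ i < k, ∀ x : U,
      x ∉ (Finset.range (i+1)).image a ∪ (Finset.range i).image b →
      f (insert (b i) ((Finset.range i).image b)) - f ((Finset.range i).image b) ≥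
        f (insert x ((Finset.range i).image b)) - f ((Finset.range i).image b))
    (c : ℝ)
    (hcA : ∀ i ≤ k, f ((Finset.range i).image a) ≤ c)
    (hcB : ∀ i ≤ k, f ((Finset.range i).image b) ≤ c) :
    ∀ O : Finset U, O.card ≤ k → 4 * c ≥ f (O \ {a 0}) :=
  interlace_greedy_minus_general f hsub hnn k a b hab hgreedyA hgreedyB c hcA hcB
end

section
/- Let f be a nonnegative submodular set function on a finite ground set U, let k ≥ 1, and let a_0, (d_i), (e_i), (D_i), (E_i) form a seeded interlaced greedy trace of length k for f. Let c be any real number with c ≥ f(D_i) and c ≥ f(E_i) for all 1 ≤ i ≤ k. Then for every finset O ⊆ U with |O| ≤ k, it holds that 4c ≥ f(O ∪ {a_0}). -/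
/-!
Both interlaced runs are greedy chains `S 1 ⊆ ⋯ ⊆ S k` started at the best singleton. For a
greedy chain and any nonempty `T` disjoint from `S k` with `#T ≤ k`, submodularity gives
`f (S k ∪ T) ≤ f (S k) + f (S #T)`: some element of `T` was still eligible at step `#T - 1`, so
its marginal gain there is at most the greedy gain, and diminishing returns lets us peel it off.
Hence `f (D_k ∪ O) ≤ 2c` and `f (E_k ∪ O) ≤ 2c`, and since `D_k ∩ E_k = {a₀}`, one more
application of submodularity bounds `f (O ∪ {a₀})` by their sum.
-/

open Finset

section Submodular

variable {U : Type*} [DecidableEq U]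

variable {f : Finset U → ℝ}

theorem IsSubmodular.marginal_le_of_subset (hf : IsSubmodular f) {A B : Finset U} (hAB : A ⊆ B)
    {x : U} (hx : x ∉ B) : f (insert x B) - f B ≤ f (insert x A) - f A := by
  have h := hf B (insert x A)
  have hunion : B ∪ insert x A = insert x B := by
    rw [union_insert, union_eq_left.mpr hAB]
  have hinter : B ∩ insert x A = A := by
    rw [inter_insert_of_notMem hx, inter_eq_right.mpr hAB]
  rw [hunion, hinter] at h
  linarith

theorem IsSubmodular.union_le (hf : IsSubmodular f) (hnn : ∀ A, 0 ≤ f A) (A B : Finset U) :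
    f (A ∪ B) ≤ f A + f B := by
  linarith [hf A B, hnn (A ∩ B)]

theorem IsSubmodular.le_add_of_inter_subset (hf : IsSubmodular f) (hnn : ∀ A, 0 ≤ f A)
    {A B O : Finset U} (h : A ∩ B ⊆ O) : f O ≤ f (A ∪ O) + f (B ∪ O) := by
  have hs := hf (A ∪ O) (B ∪ O)
  rw [← inter_union_distrib_right, union_eq_right.mpr h] at hs
  linarith [hnn (A ∪ O ∪ (B ∪ O))]

end Submodular

section GreedyChain

variable {U : Type*} [DecidableEq U] {f : Finset U → ℝ} {S : ℕ → Finset U} {k : ℕ}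

/-- `hpick` is what greedy choice gives: among any `i + 1` elements outside the final set, one has
marginal gain at `S i` at most the gain of the step `S i → S (i + 1)`. -/
theorem IsSubmodular.union_le_of_greedy_chain (hf : IsSubmodular f) (hnn : ∀ A, 0 ≤ f A)
    (hmono : Monotone S) (hbase : ∀ x, f {x} ≤ f (S 1))
    (hpick : ∀ i, 1 ≤ i → i < k → ∀ T : Finset U, #T = i + 1 → Disjoint T (S k) →
      ∃ x ∈ T, f (insert x (S i)) - f (S i) ≤ f (S (i + 1)) - f (S i))
    (n : ℕ) (hn : n < k) (T : Finset U) (hT : #T = n + 1) (hdisj : Disjoint T (S k)) :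
    f (S k ∪ T) ≤ f (S k) + f (S (n + 1)) := by
  induction n generalizing T with
  | zero =>
    obtain ⟨x, rfl⟩ := card_eq_one.mp hT
    linarith [hf.union_le hnn (S k) {x}, hbase x]
  | succ n ih =>
    obtain ⟨x, hxT, hx⟩ := hpick (n + 1) (by omega) hn T hT hdisj
    have hxS : x ∉ S k := disjoint_left.mp hdisj hxT
    have hrest := ih (by omega) (T.erase x) (by rw [card_erase_of_mem hxT, hT]; rfl)
      (hdisj.mono_left (erase_subset x T))
    have hmarg := hf.marginal_le_of_subset
      ((hmono (by omega : n + 1 ≤ k)).trans (subset_union_left (s₂ := T.erase x)))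
      (by simp [hxS] : x ∉ S k ∪ T.erase x)
    rw [← union_insert, insert_erase hxT] at hmarg
    linarith

theorem IsSubmodular.le_two_mul_of_greedy_chain (hf : IsSubmodular f) (hnn : ∀ A, 0 ≤ f A)
    (hmono : Monotone S) (hbase : ∀ x, f {x} ≤ f (S 1))
    (hpick : ∀ i, 1 ≤ i → i < k → ∀ T : Finset U, #T = i + 1 → Disjoint T (S k) →
      ∃ x ∈ T, f (insert x (S i)) - f (S i) ≤ f (S (i + 1)) - f (S i))
    (hk : 1 ≤ k) {c : ℝ} (hc : ∀ i, 1 ≤ i → i ≤ k → f (S i) ≤ c)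
    (T : Finset U) (hT : #(T \ S k) ≤ k) : f (S k ∪ T) ≤ 2 * c := by
  rw [← union_sdiff_self_eq_union]
  have hck := hc k hk le_rfl
  rcases (T \ S k).eq_empty_or_nonempty with hempty | hne
  · rw [hempty, union_empty]
    linarith [hnn (S k)]
  obtain ⟨n, hn⟩ := Nat.exists_eq_succ_of_ne_zero (card_ne_zero.mpr hne)
  have hchain := hf.union_le_of_greedy_chain hnn hmono hbase hpick n (by omega) _ hn sdiff_disjoint
  linarith [hc (n + 1) (by omega) (by omega)]

end GreedyChain

section GreedyPrefix

variable {U : Type*} [DecidableEq U] (a₀ : U) (s : ℕ → U)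

/-- `greedyPrefix a₀ s i = {a₀, s 1, …, s (i - 1)}`, the set `D_i` (or `E_i`) of the trace. -/
def greedyPrefix (i : ℕ) : Finset U := insert a₀ ((Ico 1 i).image s)

theorem greedyPrefix_one : greedyPrefix a₀ s 1 = {a₀} := by
  simp [greedyPrefix]

theorem greedyPrefix_succ {i : ℕ} (hi : 1 ≤ i) :
    greedyPrefix a₀ s (i + 1) = insert (s i) (greedyPrefix a₀ s i) := by
  rw [greedyPrefix, greedyPrefix, Nat.Ico_succ_right_eq_insert_Ico hi, image_insert, insert_comm]

theorem greedyPrefix_mono : Monotone (greedyPrefix a₀ s) := fun _ _ hij =>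
  insert_subset_insert _ (image_subset_image (Ico_subset_Ico le_rfl hij))

theorem mem_greedyPrefix_self (i : ℕ) : a₀ ∈ greedyPrefix a₀ s i :=
  mem_insert_self _ _

/-- At step `i` of either run at most `i` elements of the other run are ineligible
(`j = i` for `D`, `j = i + 1` for `E`), so `i + 1` candidates outside the own run
leave one. -/
theorem exists_mem_notMem_greedyPrefix_union (t : ℕ → U) {i j k : ℕ} (hik : i ≤ k)
    (hji : j ≤ i + 1) {T : Finset U} (hT : #T = i + 1)
    (hdisj : Disjoint T (greedyPrefix a₀ s k)) :
    ∃ x ∈ T, x ∉ greedyPrefix a₀ s i ∪ greedyPrefix a₀ t j := by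
  have hcard : #((Ico 1 j).image t) < #T := by
    have := card_image_le (s := Ico 1 j) (f := t)
    rw [Nat.card_Ico] at this
    omega
  obtain ⟨x, hxT, hxt⟩ := exists_mem_notMem_of_card_lt_card hcard
  have hxs : x ∉ greedyPrefix a₀ s k := disjoint_left.mp hdisj hxT
  have hxa : x ≠ a₀ := fun h => hxs (h ▸ mem_greedyPrefix_self a₀ s k)
  refine ⟨x, hxT, ?_⟩
  simp only [greedyPrefix, mem_union, mem_insert, hxa, hxt, false_or, or_false]
  exact fun h => hxs (greedyPrefix_mono a₀ s hik (mem_insert_of_mem h))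

theorem exists_marginal_le_greedyPrefix_succ (f : Finset U → ℝ) (t : ℕ → U) {i j k : ℕ}
    (hi : 1 ≤ i) (hik : i < k) (hji : j ≤ i + 1)
    (hgreedy : ∀ x, x ∉ greedyPrefix a₀ s i ∪ greedyPrefix a₀ t j →
      f (insert (s i) (greedyPrefix a₀ s i)) - f (greedyPrefix a₀ s i) ≥
        f (insert x (greedyPrefix a₀ s i)) - f (greedyPrefix a₀ s i))
    {T : Finset U} (hT : #T = i + 1) (hdisj : Disjoint T (greedyPrefix a₀ s k)) :
    ∃ x ∈ T, f (insert x (greedyPrefix a₀ s i)) - f (greedyPrefix a₀ s i) ≤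
      f (greedyPrefix a₀ s (i + 1)) - f (greedyPrefix a₀ s i) := by
  obtain ⟨x, hxT, hx⟩ := exists_mem_notMem_greedyPrefix_union a₀ s t hik.le hji hT hdisj
  exact ⟨x, hxT, greedyPrefix_succ a₀ s hi ▸ hgreedy x hx⟩

theorem card_union_singleton_sdiff_greedyPrefix_le (O : Finset U) (k : ℕ) :
    #((O ∪ {a₀}) \ greedyPrefix a₀ s k) ≤ #O := by
  refine card_le_card fun x hx => ?_
  rw [mem_sdiff, mem_union, mem_singleton] at hx
  exact hx.1.resolve_right fun h => hx.2 (h ▸ mem_greedyPrefix_self a₀ s k)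

theorem greedyPrefix_inter_subset {d e : ℕ → U} {k : ℕ}
    (hde : ∀ i, 1 ≤ i → i < k → ∀ j, 1 ≤ j → j < k → d i ≠ e j) :
    greedyPrefix a₀ d k ∩ greedyPrefix a₀ e k ⊆ {a₀} := by
  intro x hx
  simp only [greedyPrefix, mem_inter, mem_insert, mem_image, mem_Ico] at hx
  rw [mem_singleton]
  obtain ⟨ha | ⟨i, ⟨hi1, hik⟩, rfl⟩, ha | ⟨j, ⟨hj1, hjk⟩, hj⟩⟩ := hx
  exacts [ha, ha, ha, absurd hj.symm (hde i hi1 hik j hj1 hjk)]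

end GreedyPrefix

theorem seeded_interlace_greedy_plus_general
    {U : Type*} [DecidableEq U] (f : Finset U → ℝ)
    (hsub : ∀ A B : Finset U, f (A ∪ B) + f (A ∩ B) ≤ f A + f B)
    (hnn : ∀ A : Finset U, 0 ≤ f A)
    (k : ℕ) (hk : 1 ≤ k) (a₀ : U) (d e : ℕ → U)
    (ha₀ : ∀ x : U, f {a₀} ≥ f {x})
    (hde : ∀ i, 1 ≤ i → i < k → ∀ j, 1 ≤ j → j < k → d i ≠ e j)
    (hgreedyD : ∀ i, 1 ≤ i → i < k → ∀ x : U,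
      x ∉ insert a₀ ((Finset.Ico 1 i).image d) ∪ insert a₀ ((Finset.Ico 1 i).image e) →
      f (insert (d i) (insert a₀ ((Finset.Ico 1 i).image d))) -
          f (insert a₀ ((Finset.Ico 1 i).image d)) ≥
        f (insert x (insert a₀ ((Finset.Ico 1 i).image d))) -
          f (insert a₀ ((Finset.Ico 1 i).image d)))
    (hgreedyE : ∀ i, 1 ≤ i → i < k → ∀ x : U,
      x ∉ insert a₀ ((Finset.Ico 1 (i+1)).image d) ∪ insert a₀ ((Finset.Ico 1 i).image e) →
      f (insert (e i) (insert a₀ ((Finset.Ico 1 i).image e))) -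
          f (insert a₀ ((Finset.Ico 1 i).image e)) ≥
        f (insert x (insert a₀ ((Finset.Ico 1 i).image e))) -
          f (insert a₀ ((Finset.Ico 1 i).image e)))
    (c : ℝ)
    (hcD : ∀ i, 1 ≤ i → i ≤ k → f (insert a₀ ((Finset.Ico 1 i).image d)) ≤ c)
    (hcE : ∀ i, 1 ≤ i → i ≤ k → f (insert a₀ ((Finset.Ico 1 i).image e)) ≤ c) :
    ∀ O : Finset U, O.card ≤ k → 4 * c ≥ f (O ∪ {a₀}) := by
  intro O hO
  have hf : IsSubmodular f := hsub
  have hbase (s : ℕ → U) (x : U) : f {x} ≤ f (greedyPrefix a₀ s 1) := by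
    rw [greedyPrefix_one]
    exact ha₀ x
  have hpickD (i : ℕ) (hi : 1 ≤ i) (hik : i < k) (T : Finset U) :=
    exists_marginal_le_greedyPrefix_succ a₀ d f e (T := T) hi hik (by omega) (hgreedyD i hi hik)
  have hpickE (i : ℕ) (hi : 1 ≤ i) (hik : i < k) (T : Finset U) :=
    exists_marginal_le_greedyPrefix_succ a₀ e f d (T := T) hi hik le_rfl
      fun x hx => hgreedyE i hi hik x (by rwa [union_comm])
  have hD := hf.le_two_mul_of_greedy_chain hnn (greedyPrefix_mono a₀ d) (hbase d) hpickD hk hcD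
    (O ∪ {a₀}) ((card_union_singleton_sdiff_greedyPrefix_le a₀ d O k).trans hO)
  have hE := hf.le_two_mul_of_greedy_chain hnn (greedyPrefix_mono a₀ e) (hbase e) hpickE hk hcE
    (O ∪ {a₀}) ((card_union_singleton_sdiff_greedyPrefix_le a₀ e O k).trans hO)
  have hsplit := hf.le_add_of_inter_subset hnn
    ((greedyPrefix_inter_subset a₀ hde).trans (subset_union_right (s₁ := O)))
  linarith

theorem seeded_interlace_greedy_plus
    {U : Type*} [Fintype U] [DecidableEq U] (f : Finset U → ℝ)
    (hsub : ∀ A B : Finset U, f (A ∪ B) + f (A ∩ B) ≤ f A + f B)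
    (hnn : ∀ A : Finset U, 0 ≤ f A)
    (k : ℕ) (hk : 1 ≤ k) (a₀ : U) (d e : ℕ → U)
    (ha₀ : ∀ x : U, f {a₀} ≥ f {x})
    (hd_ne : ∀ i, 1 ≤ i → i < k → d i ≠ a₀)
    (he_ne : ∀ i, 1 ≤ i → i < k → e i ≠ a₀)
    (hd_inj : ∀ i, 1 ≤ i → i < k → ∀ j, 1 ≤ j → j < k → i ≠ j → d i ≠ d j)
    (he_inj : ∀ i, 1 ≤ i → i < k → ∀ j, 1 ≤ j → j < k → i ≠ j → e i ≠ e j)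
    (hde : ∀ i, 1 ≤ i → i < k → ∀ j, 1 ≤ j → j < k → d i ≠ e j)
    (hgreedyD : ∀ i, 1 ≤ i → i < k → ∀ x : U,
      x ∉ insert a₀ ((Finset.Ico 1 i).image d) ∪ insert a₀ ((Finset.Ico 1 i).image e) →
      f (insert (d i) (insert a₀ ((Finset.Ico 1 i).image d))) -
          f (insert a₀ ((Finset.Ico 1 i).image d)) ≥
        f (insert x (insert a₀ ((Finset.Ico 1 i).image d))) -
          f (insert a₀ ((Finset.Ico 1 i).image d)))
    (hgreedyE : ∀ i, 1 ≤ i → i < k → ∀ x : U,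
      x ∉ insert a₀ ((Finset.Ico 1 (i+1)).image d) ∪ insert a₀ ((Finset.Ico 1 i).image e) →
      f (insert (e i) (insert a₀ ((Finset.Ico 1 i).image e))) -
          f (insert a₀ ((Finset.Ico 1 i).image e)) ≥
        f (insert x (insert a₀ ((Finset.Ico 1 i).image e))) -
          f (insert a₀ ((Finset.Ico 1 i).image e)))
    (c : ℝ)
    (hcD : ∀ i, 1 ≤ i → i ≤ k → f (insert a₀ ((Finset.Ico 1 i).image d)) ≤ c)
    (hcE : ∀ i, 1 ≤ i → i ≤ k → f (insert a₀ ((Finset.Ico 1 i).image e)) ≤ c) :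
    ∀ O : Finset U, O.card ≤ k → 4 * c ≥ f (O ∪ {a₀}) :=
  seeded_interlace_greedy_plus_general f hsub hnn k hk a₀ d e ha₀ hde hgreedyD hgreedyE c hcD hcE
end

section
/- (Approximation ratio of InterlaceGreedy.) Let f be a nonnegative submodular set function on a finite ground set U and let k ≥ 1. Let (a_i), (b_i), (A_i), (B_i) form an interlaced greedy trace of length k for f, and let a_0, (d_i), (e_i), (D_i), (E_i) form a seeded interlaced greedy trace of length k for f with the same initial element a_0. Let c be any real number with c ≥ f(A_i), c ≥ f(B_i) for all 0 ≤ i ≤ k and c ≥ f(D_i), c ≥ f(E_i) for all 1 ≤ i ≤ k. Then for every finset O ⊆ U with |O| ≤ k, it holds that 4c ≥ f(O); in particular, the set returned by InterlaceGreedy has value at least f(O)/4. -/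
/-!
For a greedy chain `C₀ ⊆ ⋯ ⊆ C_k` and `T = O \ C_k`, submodularity gives
`f (C_k ∪ T) ≤ f C_k + ∑_{x ∈ T} f_x(C_k)`. Because the competing chain has blocked at most `t`
elements of `T` by step `t`, the elements of `T` can be assigned injectively to steps `t < |T|` at
which they were still available; there `f_x(C_k) ≤ f_x(C_t)` is at most the greedy gain of step `t`.
The gains telescope to `f C_{|T|} - f C₀ ≤ c`, so `f (O ∪ C_k) ≤ 2c` for each chain. If `a₀ ∉ O`
we use the chains `A, B`, otherwise `D, E`; in both cases the two final sets meet only inside `O`,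
and `f O ≤ f (O ∪ X) + f (O ∪ Y)` by submodularity and nonnegativity.
-/

open Finset

section

variable {U : Type*} [DecidableEq U]

def marginalGain (f : Finset U → ℝ) (x : U) (A : Finset U) : ℝ := f (insert x A) - f A

def Submodular (f : Finset U → ℝ) : Prop :=
  ∀ A B : Finset U, f (A ∪ B) + f (A ∩ B) ≤ f A + f B

theorem sum_le_sum_range_of_card_inter_le {v : U → ℝ} {g : ℕ → ℝ} {F : ℕ → Finset U}
    (T : Finset U) (hF : ∀ t < #T, #(T ∩ F t) ≤ t)
    (hv : ∀ x ∈ T, ∀ t < #T, x ∉ F t → v x ≤ g t) :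
    ∑ x ∈ T, v x ≤ ∑ t ∈ range #T, g t := by
  induction h : #T generalizing T with
  | zero => simp_all
  | succ n ih =>
    -- at most `n` of the `n + 1` elements of `T` lie in `F n`, so one of them can take slot `n`
    obtain ⟨x, hxT, hxF⟩ : ∃ x ∈ T, x ∉ F n := by
      by_contra! hall
      have : #(T ∩ F n) = #T := by rw [inter_eq_left.2 hall]
      have := hF n (by omega)
      omega
    have hcard : #(T.erase x) = n := by rw [card_erase_of_mem hxT, h]; rfl
    have herase := ih (T.erase x)
      (fun t ht => (card_le_card (inter_subset_inter_right (erase_subset x T))).trans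
        (hF t (by omega)))
      (fun y hy t ht => hv y (mem_of_mem_erase hy) t (by omega)) hcard
    rw [← add_sum_erase T v hxT, sum_range_succ]
    linarith [hv x hxT n (by omega) hxF]

namespace Submodular

variable {f : Finset U → ℝ}

theorem marginalGain_le_of_subset (hf : Submodular f) {A B : Finset U} (hAB : A ⊆ B)
    {x : U} (hx : x ∉ B) : marginalGain f x B ≤ marginalGain f x A := by
  have key := hf (insert x A) B
  rw [insert_union, union_eq_right.2 hAB,
    show insert x A ∩ B = A by rw [insert_inter_of_notMem hx, inter_eq_left.2 hAB]] at key
  unfold marginalGain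
  linarith

theorem union_le_add_sum_marginalGain (hf : Submodular f) (S T : Finset U) :
    f (S ∪ T) ≤ f S + ∑ x ∈ T, marginalGain f x S := by
  induction T using Finset.induction_on with
  | empty => simp
  | @insert x T hxT ih =>
    have key := hf (S ∪ T) (insert x S)
    rw [show S ∪ T ∪ insert x S = S ∪ insert x T by grind,
      show (S ∪ T) ∩ insert x S = S by grind] at key
    rw [sum_insert hxT]
    unfold marginalGain at *
    linarith

theorem le_add_of_inter_subset (hf : Submodular f) (hnn : ∀ A, 0 ≤ f A) {O X Y : Finset U}
    (hXY : X ∩ Y ⊆ O) : f O ≤ f (O ∪ X) + f (O ∪ Y) := by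
  have key := hf (O ∪ X) (O ∪ Y)
  rw [← union_inter_distrib_left, union_eq_left.2 hXY] at key
  linarith [hnn (O ∪ X ∪ (O ∪ Y))]

theorem union_le_of_greedy_chain (hf : Submodular f) {C F : ℕ → Finset U} (hC : Monotone C)
    {n : ℕ}
    (hgreedy : ∀ i < n, ∀ x ∉ C i, x ∉ F i →
      marginalGain f x (C i) ≤ f (C (i + 1)) - f (C i))
    {T : Finset U} (hT : Disjoint T (C n)) (hTn : #T ≤ n) (hTF : ∀ t < #T, #(T ∩ F t) ≤ t) :
    f (C n ∪ T) ≤ f (C n) + (f (C #T) - f (C 0)) := by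
  have hslot : ∀ x ∈ T, ∀ t < #T, x ∉ F t →
      marginalGain f x (C n) ≤ f (C (t + 1)) - f (C t) := by
    intro x hx t ht hxF
    have hxC : x ∉ C n := disjoint_left.1 hT hx
    have htn : t ≤ n := by omega
    calc marginalGain f x (C n) ≤ marginalGain f x (C t) :=
          hf.marginalGain_le_of_subset (hC htn) hxC
      _ ≤ f (C (t + 1)) - f (C t) :=
          hgreedy t (by omega) x (fun h => hxC (hC htn h)) hxF
  calc f (C n ∪ T) ≤ f (C n) + ∑ x ∈ T, marginalGain f x (C n) :=
        hf.union_le_add_sum_marginalGain _ _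
    _ ≤ f (C n) + ∑ t ∈ range #T, (f (C (t + 1)) - f (C t)) := by
        gcongr
        exact sum_le_sum_range_of_card_inter_le T hTF hslot
    _ = f (C n) + (f (C #T) - f (C 0)) := by rw [sum_range_sub (fun t => f (C t))]

theorem union_le_two_mul_of_greedy_chain (hf : Submodular f) {C F : ℕ → Finset U}
    (hC : Monotone C) {n : ℕ}
    (hgreedy : ∀ i < n, ∀ x ∉ C i, x ∉ F i →
      marginalGain f x (C i) ≤ f (C (i + 1)) - f (C i))
    {c : ℝ} (hc : ∀ i ≤ n, f (C i) ≤ c) (h0 : 0 ≤ f (C 0)) {O : Finset U} (hO : #O ≤ n)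
    (hOF : ∀ t < n, #((O \ C n) ∩ F t) ≤ t) : f (O ∪ C n) ≤ 2 * c := by
  have hTn : #(O \ C n) ≤ n := (card_le_card sdiff_subset).trans hO
  have key := hf.union_le_of_greedy_chain hC hgreedy sdiff_disjoint hTn
    (fun t ht => hOF t (by omega))
  rw [union_sdiff_self_eq_union, union_comm] at key
  linarith [hc n le_rfl, hc _ hTn]

end Submodular

def prefixSet (s : ℕ → U) (i : ℕ) : Finset U := (range i).image s

theorem prefixSet_succ (s : ℕ → U) (i : ℕ) :
    prefixSet s (i + 1) = insert (s i) (prefixSet s i) := by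
  simp [prefixSet, range_add_one, image_insert]

theorem prefixSet_monotone (s : ℕ → U) : Monotone (prefixSet s) :=
  fun _ _ h => image_subset_image (range_subset_range.2 h)

theorem card_prefixSet_le (s : ℕ → U) (i : ℕ) : #(prefixSet s i) ≤ i :=
  card_image_le.trans (card_range i).le

theorem card_inter_prefixSet_succ_le {s : ℕ → U} {T : Finset U} (hT : s 0 ∉ T) (i : ℕ) :
    #(T ∩ prefixSet s (i + 1)) ≤ i := by
  have hsub : T ∩ prefixSet s (i + 1) ⊆ (prefixSet s (i + 1)).erase (s 0) := by
    intro x hx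
    rw [mem_inter] at hx
    exact mem_erase.2 ⟨fun h => hT (h ▸ hx.1), hx.2⟩
  have h0 : s 0 ∈ prefixSet s (i + 1) := mem_image_of_mem s (by simp)
  calc #(T ∩ prefixSet s (i + 1)) ≤ #((prefixSet s (i + 1)).erase (s 0)) := card_le_card hsub
    _ = #(prefixSet s (i + 1)) - 1 := card_erase_of_mem h0
    _ ≤ i := by have := card_prefixSet_le s (i + 1); omega

structure IsInterlacedGreedy (f : Finset U → ℝ) (k : ℕ) (s r : ℕ → U) : Prop where
  greedy_left : ∀ i < k, ∀ x ∉ prefixSet s i ∪ prefixSet r i,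
    marginalGain f x (prefixSet s i) ≤ marginalGain f (s i) (prefixSet s i)
  greedy_right : ∀ i < k, ∀ x ∉ prefixSet s (i + 1) ∪ prefixSet r i,
    marginalGain f x (prefixSet r i) ≤ marginalGain f (r i) (prefixSet r i)

theorem IsInterlacedGreedy.le_four_mul {f : Finset U → ℝ} {k : ℕ} {s r : ℕ → U}
    (h : IsInterlacedGreedy f k s r) (hf : Submodular f) (hnn : ∀ A, 0 ≤ f A) {c : ℝ}
    (hcs : ∀ i ≤ k, f (prefixSet s i) ≤ c) (hcr : ∀ i ≤ k, f (prefixSet r i) ≤ c)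
    {O : Finset U} (hO : #O ≤ k) (hsr : prefixSet s k ∩ prefixSet r k ⊆ O)
    (hs0 : s 0 ∉ O \ prefixSet r k) : f O ≤ 4 * c := by
  have hleft : f (O ∪ prefixSet s k) ≤ 2 * c :=
    hf.union_le_two_mul_of_greedy_chain (prefixSet_monotone s)
      (fun i hi x hxC hxF =>
        prefixSet_succ s i ▸ h.greedy_left i hi x (notMem_union.2 ⟨hxC, hxF⟩))
      hcs (hnn _) hO
      (fun t _ => (card_le_card inter_subset_right).trans (card_prefixSet_le r t))
  have hright : f (O ∪ prefixSet r k) ≤ 2 * c :=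
    hf.union_le_two_mul_of_greedy_chain (F := fun i => prefixSet s (i + 1))
      (prefixSet_monotone r)
      (fun i hi x hxC hxF =>
        prefixSet_succ r i ▸ h.greedy_right i hi x (notMem_union.2 ⟨hxF, hxC⟩))
      hcr (hnn _) hO
      (fun t _ => card_inter_prefixSet_succ_le hs0 t)
  linarith [hf.le_add_of_inter_subset hnn hsr]

/-- The seeded trace `(a₀, d, e)` is the interlaced trace `(seeded a₀ d, seeded a₀ e)`: the choice
of `a₀` serves as step `0` of both chains, and `D_i = prefixSet (seeded a₀ d) i` for `i ≥ 1`. -/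
def seeded (x : U) (d : ℕ → U) : ℕ → U
  | 0 => x
  | i + 1 => d (i + 1)

theorem prefixSet_seeded {x : U} {d : ℕ → U} {i : ℕ} (hi : 1 ≤ i) :
    prefixSet (seeded x d) i = insert x ((Ico 1 i).image d) := by
  induction i, hi using Nat.le_induction with
  | base => rfl
  | succ i hi ih =>
    rw [prefixSet_succ, ih, Nat.Ico_succ_right_eq_insert_Ico hi, image_insert, insert_comm]
    obtain ⟨j, rfl⟩ := Nat.exists_eq_add_of_le' hi
    rfl

theorem IsInterlacedGreedy.seeded {f : Finset U → ℝ} {k : ℕ} {x : U} {d e : ℕ → U}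
    (hx : ∀ y, f {y} ≤ f {x})
    (hd : ∀ i, 1 ≤ i → i < k →
      ∀ y ∉ insert x ((Ico 1 i).image d) ∪ insert x ((Ico 1 i).image e),
        marginalGain f y (insert x ((Ico 1 i).image d)) ≤
          marginalGain f (d i) (insert x ((Ico 1 i).image d)))
    (he : ∀ i, 1 ≤ i → i < k →
      ∀ y ∉ insert x ((Ico 1 (i + 1)).image d) ∪ insert x ((Ico 1 i).image e),
        marginalGain f y (insert x ((Ico 1 i).image e)) ≤
          marginalGain f (e i) (insert x ((Ico 1 i).image e))) :
    IsInterlacedGreedy f k (seeded x d) (seeded x e) := by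
  have hfirst : ∀ y, marginalGain f y ∅ ≤ marginalGain f x ∅ := fun y => by
    simpa [marginalGain] using hx y
  constructor
  · rintro (_ | i) hi y hy
    · exact hfirst y
    · simp only [prefixSet_seeded (Nat.le_add_left 1 _)] at hy ⊢
      exact hd (i + 1) (by omega) hi y hy
  · rintro (_ | i) hi y hy
    · exact hfirst y
    · simp only [prefixSet_seeded (Nat.le_add_left 1 _)] at hy ⊢
      exact he (i + 1) (by omega) hi y hy

theorem prefixSet_seeded_le {f : Finset U → ℝ} {k : ℕ} {x : U} {d : ℕ → U} {c : ℝ}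
    (h0 : f ∅ ≤ c) (h : ∀ i, 1 ≤ i → i ≤ k → f (insert x ((Ico 1 i).image d)) ≤ c) :
    ∀ i ≤ k, f (prefixSet (seeded x d) i) ≤ c
  | 0, _ => h0
  | i + 1, hi => by
    rw [prefixSet_seeded (Nat.le_add_left 1 i)]
    exact h (i + 1) (by omega) hi

end

theorem interlace_greedy_approximation_ratio_general
    {U : Type*} [DecidableEq U] (f : Finset U → ℝ)
    (hsub : ∀ A B : Finset U, f (A ∪ B) + f (A ∩ B) ≤ f A + f B)
    (hnn : ∀ A : Finset U, 0 ≤ f A)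
    (k : ℕ) (a b : ℕ → U) (d e : ℕ → U)
    -- interlaced greedy trace (a, b)
    (hab : ∀ i < k, ∀ j < k, a i ≠ b j)
    (hgreedyA : ∀ i < k, ∀ x : U,
      x ∉ (Finset.range i).image a ∪ (Finset.range i).image b →
      f (insert (a i) ((Finset.range i).image a)) - f ((Finset.range i).image a) ≥
        f (insert x ((Finset.range i).image a)) - f ((Finset.range i).image a))
    (hgreedyB : ∀ i < k, ∀ x : U,
      x ∉ (Finset.range (i+1)).image a ∪ (Finset.range i).image b →
      f (insert (b i) ((Finset.range i).image b)) - f ((Finset.range i).image b) ≥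
        f (insert x ((Finset.range i).image b)) - f ((Finset.range i).image b))
    -- seeded interlaced greedy trace (a 0, d, e)
    (ha₀ : ∀ x : U, f {a 0} ≥ f {x})
    (hde : ∀ i, 1 ≤ i → i < k → ∀ j, 1 ≤ j → j < k → d i ≠ e j)
    (hgreedyD : ∀ i, 1 ≤ i → i < k → ∀ x : U,
      x ∉ insert (a 0) ((Finset.Ico 1 i).image d) ∪ insert (a 0) ((Finset.Ico 1 i).image e) →
      f (insert (d i) (insert (a 0) ((Finset.Ico 1 i).image d))) -
          f (insert (a 0) ((Finset.Ico 1 i).image d)) ≥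
        f (insert x (insert (a 0) ((Finset.Ico 1 i).image d))) -
          f (insert (a 0) ((Finset.Ico 1 i).image d)))
    (hgreedyE : ∀ i, 1 ≤ i → i < k → ∀ x : U,
      x ∉ insert (a 0) ((Finset.Ico 1 (i+1)).image d) ∪ insert (a 0) ((Finset.Ico 1 i).image e) →
      f (insert (e i) (insert (a 0) ((Finset.Ico 1 i).image e))) -
          f (insert (a 0) ((Finset.Ico 1 i).image e)) ≥
        f (insert x (insert (a 0) ((Finset.Ico 1 i).image e))) -
          f (insert (a 0) ((Finset.Ico 1 i).image e)))
    (c : ℝ)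
    (hcA : ∀ i ≤ k, f ((Finset.range i).image a) ≤ c)
    (hcB : ∀ i ≤ k, f ((Finset.range i).image b) ≤ c)
    (hcD : ∀ i, 1 ≤ i → i ≤ k → f (insert (a 0) ((Finset.Ico 1 i).image d)) ≤ c)
    (hcE : ∀ i, 1 ≤ i → i ≤ k → f (insert (a 0) ((Finset.Ico 1 i).image e)) ≤ c) :
    ∀ O : Finset U, O.card ≤ k → 4 * c ≥ f O := by
  intro O hO
  by_cases ha0O : a 0 ∈ O
  · have hk : 1 ≤ k := hO.trans' (card_pos.2 ⟨_, ha0O⟩)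
    have hc0 : f ∅ ≤ c := hcA 0 k.zero_le
    have hinterDE : prefixSet (seeded (a 0) d) k ∩ prefixSet (seeded (a 0) e) k ⊆ O := by
      intro x hx
      simp only [prefixSet_seeded hk, mem_inter, mem_insert, mem_image, mem_Ico] at hx
      rcases hx with ⟨rfl | ⟨i, ⟨hi1, hik⟩, rfl⟩, hxe⟩
      · exact ha0O
      rcases hxe with hda | ⟨j, ⟨hj1, hjk⟩, hji⟩
      · exact hda ▸ ha0O
      · exact absurd hji.symm (hde i hi1 hik j hj1 hjk)
    refine (IsInterlacedGreedy.seeded ha₀ hgreedyD hgreedyE).le_four_mul hsub hnn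
      (prefixSet_seeded_le hc0 hcD) (prefixSet_seeded_le hc0 hcE) hO hinterDE fun h => (mem_sdiff.1 h).2 ?_
    exact mem_image_of_mem _ (mem_range.2 hk)
  · have hinterAB : prefixSet a k ∩ prefixSet b k ⊆ O := by
      intro x hx
      simp only [prefixSet, mem_inter, mem_image, mem_range] at hx
      obtain ⟨⟨i, hi, rfl⟩, j, hj, hji⟩ := hx
      exact absurd hji.symm (hab i hi j hj)
    exact (IsInterlacedGreedy.mk hgreedyA hgreedyB).le_four_mul hsub hnn hcA hcB hO hinterAB
      fun h => ha0O (mem_sdiff.1 h).1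

theorem interlace_greedy_approximation_ratio
    {U : Type*} [Fintype U] [DecidableEq U] (f : Finset U → ℝ)
    (hsub : ∀ A B : Finset U, f (A ∪ B) + f (A ∩ B) ≤ f A + f B)
    (hnn : ∀ A : Finset U, 0 ≤ f A)
    (k : ℕ) (hk : 1 ≤ k) (a b : ℕ → U) (d e : ℕ → U)
    -- interlaced greedy trace (a, b)
    (ha_inj : ∀ i < k, ∀ j < k, i ≠ j → a i ≠ a j)
    (hb_inj : ∀ i < k, ∀ j < k, i ≠ j → b i ≠ b j)
    (hab : ∀ i < k, ∀ j < k, a i ≠ b j)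
    (hgreedyA : ∀ i < k, ∀ x : U,
      x ∉ (Finset.range i).image a ∪ (Finset.range i).image b →
      f (insert (a i) ((Finset.range i).image a)) - f ((Finset.range i).image a) ≥
        f (insert x ((Finset.range i).image a)) - f ((Finset.range i).image a))
    (hgreedyB : ∀ i < k, ∀ x : U,
      x ∉ (Finset.range (i+1)).image a ∪ (Finset.range i).image b →
      f (insert (b i) ((Finset.range i).image b)) - f ((Finset.range i).image b) ≥
        f (insert x ((Finset.range i).image b)) - f ((Finset.range i).image b))
    -- seeded interlaced greedy trace (a 0, d, e)
    (ha₀ : ∀ x : U, f {a 0} ≥ f {x})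
    (hd_ne : ∀ i, 1 ≤ i → i < k → d i ≠ a 0)
    (he_ne : ∀ i, 1 ≤ i → i < k → e i ≠ a 0)
    (hd_inj : ∀ i, 1 ≤ i → i < k → ∀ j, 1 ≤ j → j < k → i ≠ j → d i ≠ d j)
    (he_inj : ∀ i, 1 ≤ i → i < k → ∀ j, 1 ≤ j → j < k → i ≠ j → e i ≠ e j)
    (hde : ∀ i, 1 ≤ i → i < k → ∀ j, 1 ≤ j → j < k → d i ≠ e j)
    (hgreedyD : ∀ i, 1 ≤ i → i < k → ∀ x : U,
      x ∉ insert (a 0) ((Finset.Ico 1 i).image d) ∪ insert (a 0) ((Finset.Ico 1 i).image e) →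
      f (insert (d i) (insert (a 0) ((Finset.Ico 1 i).image d))) -
          f (insert (a 0) ((Finset.Ico 1 i).image d)) ≥
        f (insert x (insert (a 0) ((Finset.Ico 1 i).image d))) -
          f (insert (a 0) ((Finset.Ico 1 i).image d)))
    (hgreedyE : ∀ i, 1 ≤ i → i < k → ∀ x : U,
      x ∉ insert (a 0) ((Finset.Ico 1 (i+1)).image d) ∪ insert (a 0) ((Finset.Ico 1 i).image e) →
      f (insert (e i) (insert (a 0) ((Finset.Ico 1 i).image e))) -
          f (insert (a 0) ((Finset.Ico 1 i).image e)) ≥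
        f (insert x (insert (a 0) ((Finset.Ico 1 i).image e))) -
          f (insert (a 0) ((Finset.Ico 1 i).image e)))
    (c : ℝ)
    (hcA : ∀ i ≤ k, f ((Finset.range i).image a) ≤ c)
    (hcB : ∀ i ≤ k, f ((Finset.range i).image b) ≤ c)
    (hcD : ∀ i, 1 ≤ i → i ≤ k → f (insert (a 0) ((Finset.Ico 1 i).image d)) ≤ c)
    (hcE : ∀ i, 1 ≤ i → i ≤ k → f (insert (a 0) ((Finset.Ico 1 i).image e)) ≤ c) :
    ∀ O : Finset U, O.card ≤ k → 4 * c ≥ f O :=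
  interlace_greedy_approximation_ratio_general f hsub hnn k a b d e hab hgreedyA hgreedyB ha₀ hde
    hgreedyD hgreedyE c hcA hcB hcD hcE
end

section
/- (Threshold comparison step.) Let f be a submodular set function on a finite ground set U, let 0 < δ ≤ 1/2 and τ ≥ 0 be reals, let S' ⊆ S ⊆ U be finsets, let o ∈ U \ S, and let a ∈ U. If f_a(S) ≥ τ and f_o(S') < τ/(1 − δ), then f_o(S) ≤ (1 + 2δ) · f_a(S). -/
theorem diminishing_returns_of_submodular {U : Type*} [DecidableEq U] (f : Finset U → ℝ)
    (hsub : ∀ A B : Finset U, f (A ∪ B) + f (A ∩ B) ≤ f A + f B)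
    {S' S : Finset U} (hS'S : S' ⊆ S) {o : U} (ho : o ∉ S) :
    f (insert o S) - f S ≤ f (insert o S') - f S' := by
  have hunion : insert o S' ∪ S = insert o S := by
    rw [Finset.insert_union, Finset.union_eq_right.mpr hS'S]
  have hinter : insert o S' ∩ S = S' := by
    rw [Finset.insert_inter_of_notMem ho, Finset.inter_eq_left.mpr hS'S]
  have := hsub (insert o S') S
  rw [hunion, hinter] at this
  linarith

theorem div_one_sub_le_one_add_two_mul {δ τ : ℝ} (hδ0 : 0 ≤ δ) (hδ : δ ≤ 1/2) (hτ : 0 ≤ τ) :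
    τ / (1 - δ) ≤ (1 + 2 * δ) * τ := by
  rw [div_le_iff₀ (by linarith)]
  -- `(1 + 2δ)(1 - δ) = 1 + δ(1 - 2δ)`
  nlinarith [mul_nonneg (mul_nonneg hδ0 hτ) (by linarith : (0:ℝ) ≤ 1 - 2 * δ)]

theorem threshold_comparison_step_general
    {U : Type*} [DecidableEq U] (f : Finset U → ℝ)
    (hsub : ∀ A B : Finset U, f (A ∪ B) + f (A ∩ B) ≤ f A + f B)
    (δ τ : ℝ) (hδ0 : 0 < δ) (hδ : δ ≤ 1/2) (hτ : 0 ≤ τ)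
    (S' S : Finset U) (hS'S : S' ⊆ S)
    (o : U) (ho : o ∉ S) (a : U)
    (ha : f (insert a S) - f S ≥ τ)
    (ho' : f (insert o S') - f S' < τ / (1 - δ)) :
    f (insert o S) - f S ≤ (1 + 2*δ) * (f (insert a S) - f S) := by
  calc f (insert o S) - f S
      ≤ f (insert o S') - f S' := diminishing_returns_of_submodular f hsub hS'S ho
    _ ≤ τ / (1 - δ) := ho'.le
    _ ≤ (1 + 2 * δ) * τ := div_one_sub_le_one_add_two_mul hδ0.le hδ hτ
    _ ≤ (1 + 2 * δ) * (f (insert a S) - f S) := by gcongr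

theorem threshold_comparison_step
    {U : Type*} [Fintype U] [DecidableEq U] (f : Finset U → ℝ)
    (hsub : ∀ A B : Finset U, f (A ∪ B) + f (A ∩ B) ≤ f A + f B)
    (δ τ : ℝ) (hδ0 : 0 < δ) (hδ : δ ≤ 1/2) (hτ : 0 ≤ τ)
    (S' S : Finset U) (hS'S : S' ⊆ S)
    (o : U) (ho : o ∉ S) (a : U)
    (ha : f (insert a S) - f S ≥ τ)
    (ho' : f (insert o S') - f S' < τ / (1 - δ)) :
    f (insert o S) - f S ≤ (1 + 2*δ) * (f (insert a S) - f S) :=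
  threshold_comparison_step_general f hsub δ τ hδ0 hδ hτ S' S hS'S o ho a ha ho'
end

section
/- (Thresholded greedy telescoping bound.) Let f be a nonnegative submodular set function on a finite ground set U, let 0 < δ < 1/2, M ≥ 0, and k ≥ 1. Let b_0, …, b_{m−1} be pairwise distinct elements of U with prefixes B_0 = ∅, B_i = {b_0, …, b_{i−1}}, and B = B_m, and suppose f_{b_i}(B_i) ≥ 0 for every i < m. Let o_0, …, o_{l−1} be pairwise distinct elements of U \ B with prefixes Ô_i = {o_0, …, o_{i−1}}, and suppose l − m ≤ k. If f_{o_i}(B_i) ≤ (1 + 2δ) · f_{b_i}(B_i) for every i < min(l, m), and f_{o_i}(B) ≤ δM/k for every i with m ≤ i < l, then f(Ô_l ∪ B) − f(B) ≤ (1 + 2δ) · f(B) + δM; equivalently f(Ô_l ∪ B) ≤ (2 + 2δ) · f(B) + δM. -/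
/-!
Telescope `f (Ô_l ∪ B) - f B` into the marginal gains of `o_i` on top of `Ô_i ∪ B`. By
submodularity each gain is at most that of `o_i` on the smaller set `B_i` (for `i < m`) or
`B` (for `i ≥ m`). The first kind is compared with the greedy gains of `b_i`, which telescope
to `f B - f ∅ ≤ f B`; there are at most `k` terms of the second kind, each at most `δ M / k`.
-/

open Finset

section Marginal

variable {U : Type*} [DecidableEq U]

theorem marginalGain_anti_of_submodular {f : Finset U → ℝ}
    (hsub : ∀ A B : Finset U, f (A ∪ B) + f (A ∩ B) ≤ f A + f B)
    {S T : Finset U} (hST : S ⊆ T) {x : U} (hx : x ∉ T) :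
    marginalGain f x T ≤ marginalGain f x S := by
  have h := hsub (insert x S) T
  rw [insert_union, union_eq_right.2 hST, insert_inter_of_notMem hx, inter_eq_left.2 hST] at h
  unfold marginalGain
  linarith

theorem sum_marginalGain_image_range_union (f : Finset U → ℝ) (a : ℕ → U) (C : Finset U)
    (n : ℕ) :
    ∑ i ∈ range n, marginalGain f (a i) ((range i).image a ∪ C) =
      f ((range n).image a ∪ C) - f C := by
  simpa only [marginalGain, range_add_one, image_insert, insert_union, range_zero, image_empty,
    empty_union] using sum_range_sub (fun i ↦ f ((range i).image a ∪ C)) n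

theorem sum_marginalGain_image_range_le {f : Finset U → ℝ} (hf : 0 ≤ f ∅) (a : ℕ → U)
    {n m : ℕ} (hnm : n ≤ m)
    (hgain : ∀ i < m, 0 ≤ marginalGain f (a i) ((range i).image a)) :
    ∑ i ∈ range n, marginalGain f (a i) ((range i).image a) ≤ f ((range m).image a) := by
  have htel := sum_marginalGain_image_range_union f a ∅ m
  simp only [union_empty] at htel
  calc ∑ i ∈ range n, marginalGain f (a i) ((range i).image a)
      ≤ ∑ i ∈ range m, marginalGain f (a i) ((range i).image a) :=
        sum_le_sum_of_subset_of_nonneg (range_subset_range.2 hnm)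
          fun i hi _ ↦ hgain i (mem_range.1 hi)
    _ ≤ f ((range m).image a) := by linarith

theorem notMem_image_range_union {a : ℕ → U} {i l : ℕ} (hi : i < l)
    (ha : ∀ i < l, ∀ j < l, i ≠ j → a i ≠ a j) {C : Finset U} (hC : a i ∉ C) :
    a i ∉ (range i).image a ∪ C := by
  simp only [mem_union, mem_image, mem_range, not_or, not_exists, not_and]
  exact ⟨fun j hj ↦ ha j (hj.trans hi) i hi hj.ne, hC⟩

end Marginal

theorem natCast_mul_div_le {n k : ℕ} (hnk : n ≤ k) {x : ℝ} (hx : 0 ≤ x) :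
    n * (x / k) ≤ x := by
  rcases Nat.eq_zero_or_pos k with rfl | hk
  · simpa [Nat.le_zero.1 hnk] using hx
  calc (n : ℝ) * (x / k) ≤ k * (x / k) := by gcongr
    _ = x := mul_div_cancel₀ x (by positivity)

theorem thresholded_greedy_telescoping_bound_general
    {U : Type*} [DecidableEq U] (f : Finset U → ℝ)
    (hsub : ∀ A B : Finset U, f (A ∪ B) + f (A ∩ B) ≤ f A + f B)
    (hnn : ∀ A : Finset U, 0 ≤ f A)
    (δ M : ℝ) (hδ0 : 0 < δ) (hM : 0 ≤ M)
    (k : ℕ)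
    (m : ℕ) (b : ℕ → U)
    (hb_gain : ∀ i < m,
      0 ≤ f (insert (b i) ((Finset.range i).image b)) - f ((Finset.range i).image b))
    (l : ℕ) (o : ℕ → U)
    (ho_inj : ∀ i < l, ∀ j < l, i ≠ j → o i ≠ o j)
    (ho_notin : ∀ i < l, o i ∉ (Finset.range m).image b)
    (hlm : l - m ≤ k)
    (hcomp : ∀ i < min l m,
      f (insert (o i) ((Finset.range i).image b)) - f ((Finset.range i).image b) ≤
        (1 + 2*δ) *
          (f (insert (b i) ((Finset.range i).image b)) - f ((Finset.range i).image b)))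
    (htail : ∀ i, m ≤ i → i < l →
      f (insert (o i) ((Finset.range m).image b)) - f ((Finset.range m).image b) ≤
        δ * M / k) :
    f ((Finset.range l).image o ∪ (Finset.range m).image b) -
        f ((Finset.range m).image b) ≤
      (1 + 2*δ) * f ((Finset.range m).image b) + δ * M ∧
    f ((Finset.range l).image o ∪ (Finset.range m).image b) ≤
      (2 + 2*δ) * f ((Finset.range m).image b) + δ * M := by
  set B := (range m).image b
  set gain := fun i ↦ marginalGain f (o i) ((range i).image o ∪ B)
  have hfresh : ∀ i < l, o i ∉ (range i).image o ∪ B := fun i hi ↦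
    notMem_image_range_union hi ho_inj (ho_notin i hi)
  have head : ∑ i ∈ range (min l m), gain i ≤ (1 + 2*δ) * f B := calc
    _ ≤ ∑ i ∈ range (min l m), (1 + 2*δ) * marginalGain f (b i) ((range i).image b) := by
      refine sum_le_sum fun i hi ↦ ?_
      have hi' := lt_min_iff.1 (mem_range.1 hi)
      have hBi : (range i).image b ⊆ (range i).image o ∪ B :=
        (image_subset_image (range_subset_range.2 hi'.2.le)).trans subset_union_right
      exact (marginalGain_anti_of_submodular hsub hBi (hfresh i hi'.1)).trans
        (hcomp i (mem_range.1 hi))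
    _ ≤ (1 + 2*δ) * f B := by
      rw [← mul_sum]
      gcongr
      exact sum_marginalGain_image_range_le (hnn ∅) b (min_le_right l m) hb_gain
  have tail : ∑ i ∈ Ico (min l m) l, gain i ≤ δ * M := calc
    _ ≤ ∑ _i ∈ Ico (min l m) l, δ * M / k := by
      refine sum_le_sum fun i hi ↦ ?_
      obtain ⟨hli, hil⟩ := mem_Ico.1 hi
      have hmi : m ≤ i := by omega
      exact (marginalGain_anti_of_submodular hsub subset_union_right (hfresh i hil)).trans
        (htail i hmi hil)
    _ ≤ δ * M := by
      rw [sum_const, Nat.card_Ico, nsmul_eq_mul]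
      exact natCast_mul_div_le (by omega) (by positivity)
  have key : f ((range l).image o ∪ B) - f B ≤ (1 + 2*δ) * f B + δ * M := by
    rw [← sum_marginalGain_image_range_union, ← sum_range_add_sum_Ico _ (min_le_left l m)]
    exact add_le_add head tail
  exact ⟨key, by linarith [hnn B]⟩

theorem thresholded_greedy_telescoping_bound
    {U : Type*} [Fintype U] [DecidableEq U] (f : Finset U → ℝ)
    (hsub : ∀ A B : Finset U, f (A ∪ B) + f (A ∩ B) ≤ f A + f B)
    (hnn : ∀ A : Finset U, 0 ≤ f A)
    (δ M : ℝ) (hδ0 : 0 < δ) (hδ : δ < 1/2) (hM : 0 ≤ M)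
    (k : ℕ) (hk : 1 ≤ k)
    (m : ℕ) (b : ℕ → U)
    (hb_inj : ∀ i < m, ∀ j < m, i ≠ j → b i ≠ b j)
    (hb_gain : ∀ i < m,
      0 ≤ f (insert (b i) ((Finset.range i).image b)) - f ((Finset.range i).image b))
    (l : ℕ) (o : ℕ → U)
    (ho_inj : ∀ i < l, ∀ j < l, i ≠ j → o i ≠ o j)
    (ho_notin : ∀ i < l, o i ∉ (Finset.range m).image b)
    (hlm : l - m ≤ k)
    (hcomp : ∀ i < min l m,
      f (insert (o i) ((Finset.range i).image b)) - f ((Finset.range i).image b) ≤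
        (1 + 2*δ) *
          (f (insert (b i) ((Finset.range i).image b)) - f ((Finset.range i).image b)))
    (htail : ∀ i, m ≤ i → i < l →
      f (insert (o i) ((Finset.range m).image b)) - f ((Finset.range m).image b) ≤
        δ * M / k) :
    f ((Finset.range l).image o ∪ (Finset.range m).image b) -
        f ((Finset.range m).image b) ≤
      (1 + 2*δ) * f ((Finset.range m).image b) + δ * M ∧
    f ((Finset.range l).image o ∪ (Finset.range m).image b) ≤
      (2 + 2*δ) * f ((Finset.range m).image b) + δ * M :=
  thresholded_greedy_telescoping_bound_general f hsub hnn δ M hδ0 hM k m b hb_gain l o ho_inj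
    ho_notin hlm hcomp htail
end

section
/- Let f be a nonnegative submodular set function on a finite ground set U, let δ > 0 and M ≥ 0 be reals, and let O, A, B ⊆ U be finsets with A ∩ B = ∅ and a_0 an element of A. If f(O ∪ A) ≤ (2 + 2δ) · f(A) + δM and f((O \ {a_0}) ∪ B) ≤ (2 + 2δ) · f(B) + δM, then f(O \ {a_0}) ≤ 2(1 + δ) · (f(A) + f(B)) + 2δM. -/
namespace Finset

variable {α : Type*} [DecidableEq α]

theorem union_inter_sdiff_singleton_union {O A B : Finset α} (hAB : Disjoint A B) {a : α}
    (ha : a ∈ A) : (O ∪ A) ∩ (O \ {a} ∪ B) = O \ {a} := by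
  have haB : a ∉ B := disjoint_left.mp hAB ha
  ext x
  simp only [mem_inter, mem_union, mem_sdiff, mem_singleton]
  constructor
  · rintro ⟨hxO | hxA, hx | hxB⟩
    · exact hx
    · exact ⟨hxO, fun hxa => haB (hxa ▸ hxB)⟩
    · exact hx
    · exact absurd hxB (disjoint_left.mp hAB hxA)
  · exact fun hx => ⟨Or.inl hx.1, Or.inl hx⟩

end Finset

theorem inter_le_add_of_submodular {α : Type*} [DecidableEq α] {f : Finset α → ℝ}
    (hsub : ∀ X Y : Finset α, f (X ∪ Y) + f (X ∩ Y) ≤ f X + f Y)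
    (hnn : ∀ X : Finset α, 0 ≤ f X) (X Y : Finset α) : f (X ∩ Y) ≤ f X + f Y := by
  linarith [hsub X Y, hnn (X ∪ Y)]

theorem fast_combine_minus_general
    {U : Type*} [DecidableEq U] (f : Finset U → ℝ)
    (hsub : ∀ A B : Finset U, f (A ∪ B) + f (A ∩ B) ≤ f A + f B)
    (hnn : ∀ A : Finset U, 0 ≤ f A)
    (δ M : ℝ)
    (O A B : Finset U) (hAB : A ∩ B = ∅) (a₀ : U) (ha₀ : a₀ ∈ A)
    (hA : f (O ∪ A) ≤ (2 + 2*δ) * f A + δ * M)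
    (hB : f ((O \ {a₀}) ∪ B) ≤ (2 + 2*δ) * f B + δ * M) :
    f (O \ {a₀}) ≤ 2 * (1 + δ) * (f A + f B) + 2 * δ * M := by
  have hinter := inter_le_add_of_submodular hsub hnn (O ∪ A) (O \ {a₀} ∪ B)
  rw [Finset.union_inter_sdiff_singleton_union (Finset.disjoint_iff_inter_eq_empty.mpr hAB)
    ha₀] at hinter
  linarith

theorem fast_combine_minus
    {U : Type*} [Fintype U] [DecidableEq U] (f : Finset U → ℝ)
    (hsub : ∀ A B : Finset U, f (A ∪ B) + f (A ∩ B) ≤ f A + f B)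
    (hnn : ∀ A : Finset U, 0 ≤ f A)
    (δ M : ℝ) (hδ : 0 < δ) (hM : 0 ≤ M)
    (O A B : Finset U) (hAB : A ∩ B = ∅) (a₀ : U) (ha₀ : a₀ ∈ A)
    (hA : f (O ∪ A) ≤ (2 + 2*δ) * f A + δ * M)
    (hB : f ((O \ {a₀}) ∪ B) ≤ (2 + 2*δ) * f B + δ * M) :
    f (O \ {a₀}) ≤ 2 * (1 + δ) * (f A + f B) + 2 * δ * M :=
  fast_combine_minus_general f hsub hnn δ M O A B hAB a₀ ha₀ hA hB
end

section
/- Let f be a nonnegative submodular set function on a finite ground set U, let δ > 0 and M ≥ 0 be reals, and let O, D, E ⊆ U be finsets with D ∩ E = {a_0} for some element a_0. If f(O ∪ D) ≤ (2 + 2δ) · f(D) + δM and f(O ∪ E) ≤ (2 + 2δ) · f(E) + δM, then f(O ∪ {a_0}) ≤ 2(1 + δ) · (f(D) + f(E)) + 2δM. -/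
theorem apply_inter_le_add_of_submodular {U : Type*} [DecidableEq U] {f : Finset U → ℝ}
    (hsub : ∀ A B : Finset U, f (A ∪ B) + f (A ∩ B) ≤ f A + f B)
    (hnn : ∀ A : Finset U, 0 ≤ f A) (A B : Finset U) :
    f (A ∩ B) ≤ f A + f B := by
  linarith [hsub A B, hnn (A ∪ B)]

theorem fast_combine_plus_general
    {U : Type*} [DecidableEq U] (f : Finset U → ℝ)
    (hsub : ∀ A B : Finset U, f (A ∪ B) + f (A ∩ B) ≤ f A + f B)
    (hnn : ∀ A : Finset U, 0 ≤ f A)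
    (δ M : ℝ)
    (O D E : Finset U) (a₀ : U) (hDE : D ∩ E = {a₀})
    (hD : f (O ∪ D) ≤ (2 + 2*δ) * f D + δ * M)
    (hE : f (O ∪ E) ≤ (2 + 2*δ) * f E + δ * M) :
    f (O ∪ {a₀}) ≤ 2 * (1 + δ) * (f D + f E) + 2 * δ * M := by
  have hinter : (O ∪ D) ∩ (O ∪ E) = O ∪ {a₀} := by
    rw [← Finset.union_inter_distrib_left, hDE]
  have := apply_inter_le_add_of_submodular hsub hnn (O ∪ D) (O ∪ E)
  rw [hinter] at this
  linarith

theorem fast_combine_plus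
    {U : Type*} [Fintype U] [DecidableEq U] (f : Finset U → ℝ)
    (hsub : ∀ A B : Finset U, f (A ∪ B) + f (A ∩ B) ≤ f A + f B)
    (hnn : ∀ A : Finset U, 0 ≤ f A)
    (δ M : ℝ) (hδ : 0 < δ) (hM : 0 ≤ M)
    (O D E : Finset U) (a₀ : U) (hDE : D ∩ E = {a₀})
    (hD : f (O ∪ D) ≤ (2 + 2*δ) * f D + δ * M)
    (hE : f (O ∪ E) ≤ (2 + 2*δ) * f E + δ * M) :
    f (O ∪ {a₀}) ≤ 2 * (1 + δ) * (f D + f E) + 2 * δ * M :=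
  fast_combine_plus_general f hsub hnn δ M O D E a₀ hDE hD hE
end

section
/- (Approximation ratio of FastInterlaceGreedy, proof skeleton.) Let f be a nonnegative submodular set function on a finite ground set U, let 0 < δ < 1/2 and M ≥ 0 be reals, and let O, A, B, D, E ⊆ U be finsets with A ∩ B = ∅ and D ∩ E = {a_0} for some element a_0 ∈ A. Suppose f(O ∪ A) ≤ (2 + 2δ)f(A) + δM, f((O \ {a_0}) ∪ B) ≤ (2 + 2δ)f(B) + δM, f(O ∪ D) ≤ (2 + 2δ)f(D) + δM, and f(O ∪ E) ≤ (2 + 2δ)f(E) + δM. Let c = max{f(A), f(B), f(D), f(E)}, and assume c ≤ f(O) and M ≤ f(O). Then c ≥ (1 − 6δ) · f(O) / 4. -/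
/-!
If the sets `X` and `Y` meet only inside `O`, then `(O ∪ X) ∩ (O ∪ Y) = O`, so submodularity and
nonnegativity give `f O ≤ f (O ∪ X) + f (O ∪ Y)`. When `a₀ ∈ O` the pair `D, E` has this property,
otherwise `O \ {a₀} = O` and the disjoint pair `A, B` has it; either way the two greedy bounds give
`f O ≤ (4 + 4δ) c + 2δ M ≤ 4 c + 6δ f O`.
-/

namespace Finset

variable {U : Type*} [DecidableEq U]

theorem le_add_of_submodular_of_inter_subset {f : Finset U → ℝ}
    (hsub : ∀ A B : Finset U, f (A ∪ B) + f (A ∩ B) ≤ f A + f B)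
    (hnn : ∀ A : Finset U, 0 ≤ f A) {O X Y : Finset U} (hXY : X ∩ Y ⊆ O) :
    f O ≤ f (O ∪ X) + f (O ∪ Y) := by
  have hinter : (O ∪ X) ∩ (O ∪ Y) = O := by
    rw [← union_inter_distrib_left, union_eq_left.2 hXY]
  have hsubmod := hsub (O ∪ X) (O ∪ Y)
  rw [hinter] at hsubmod
  linarith [hnn ((O ∪ X) ∪ (O ∪ Y))]

end Finset

open Finset in
theorem fast_interlace_greedy_ratio_general
    {U : Type*} [DecidableEq U] (f : Finset U → ℝ)
    (hsub : ∀ A B : Finset U, f (A ∪ B) + f (A ∩ B) ≤ f A + f B)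
    (hnn : ∀ A : Finset U, 0 ≤ f A)
    (δ M : ℝ) (hδ0 : 0 < δ)
    (O A B D E : Finset U) (a₀ : U)
    (hAB : A ∩ B = ∅) (hDE : D ∩ E = {a₀})
    (hA : f (O ∪ A) ≤ (2 + 2*δ) * f A + δ * M)
    (hB : f ((O \ {a₀}) ∪ B) ≤ (2 + 2*δ) * f B + δ * M)
    (hD : f (O ∪ D) ≤ (2 + 2*δ) * f D + δ * M)
    (hE : f (O ∪ E) ≤ (2 + 2*δ) * f E + δ * M)
    (c : ℝ) (hc : c = max (max (f A) (f B)) (max (f D) (f E)))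
    (hcO : c ≤ f O) (hMO : M ≤ f O) :
    c ≥ (1 - 6*δ) * f O / 4 := by
  have pair_bound : ∀ X Y : Finset U, X ∩ Y ⊆ O → f X ≤ c → f Y ≤ c →
      f (O ∪ X) ≤ (2 + 2*δ) * f X + δ * M → f (O ∪ Y) ≤ (2 + 2*δ) * f Y + δ * M →
      f O ≤ (4 + 4*δ) * c + 2 * δ * M := by
    intro X Y hXY hXc hYc hX hY
    calc f O ≤ f (O ∪ X) + f (O ∪ Y) := le_add_of_submodular_of_inter_subset hsub hnn hXY
      _ ≤ (2 + 2*δ) * (f X + f Y) + 2 * δ * M := by linarith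
      _ ≤ (2 + 2*δ) * (c + c) + 2 * δ * M := by gcongr
      _ = (4 + 4*δ) * c + 2 * δ * M := by ring
  have hfO : f O ≤ (4 + 4*δ) * c + 2 * δ * M := by
    by_cases h : a₀ ∈ O
    · exact pair_bound D E (by simpa [hDE]) (by simp [hc]) (by simp [hc]) hD hE
    · rw [sdiff_singleton_eq_erase, erase_eq_of_notMem h] at hB
      exact pair_bound A B (by simp [hAB]) (by simp [hc]) (by simp [hc]) hA hB
  linarith [mul_le_mul_of_nonneg_left hcO hδ0.le, mul_le_mul_of_nonneg_left hMO hδ0.le]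

theorem fast_interlace_greedy_ratio
    {U : Type*} [Fintype U] [DecidableEq U] (f : Finset U → ℝ)
    (hsub : ∀ A B : Finset U, f (A ∪ B) + f (A ∩ B) ≤ f A + f B)
    (hnn : ∀ A : Finset U, 0 ≤ f A)
    (δ M : ℝ) (hδ0 : 0 < δ) (hδ : δ < 1/2) (hM : 0 ≤ M)
    (O A B D E : Finset U) (a₀ : U)
    (hAB : A ∩ B = ∅) (hDE : D ∩ E = {a₀}) (ha₀ : a₀ ∈ A)
    (hA : f (O ∪ A) ≤ (2 + 2*δ) * f A + δ * M)
    (hB : f ((O \ {a₀}) ∪ B) ≤ (2 + 2*δ) * f B + δ * M)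
    (hD : f (O ∪ D) ≤ (2 + 2*δ) * f D + δ * M)
    (hE : f (O ∪ E) ≤ (2 + 2*δ) * f E + δ * M)
    (c : ℝ) (hc : c = max (max (f A) (f B)) (max (f D) (f E)))
    (hcO : c ≤ f O) (hMO : M ≤ f O) :
    c ≥ (1 - 6*δ) * f O / 4 :=
  fast_interlace_greedy_ratio_general f hsub hnn δ M hδ0 O A B D E a₀ hAB hDE hA hB hD hE c hc hcO
    hMO
end

section
/- (Tight example value bound.) Let U be a finite type, let k ≥ 2 be an even natural number, let O ⊆ U be a finset with |O| = k, and let a, b ∈ U be distinct elements with a ∉ O and b ∉ O. Define f : Finset U → ℝ by: f(C) = 0 if a ∈ C and b ∈ C; f(C) = |C ∩ O|/(2k) + 1/k if exactly one of a, b belongs to C; and f(C) = |C ∩ O|/k if a ∉ C and b ∉ C. Then f(O) = 1, and for every finset C ⊆ U containing exactly one of a, b and satisfying |C ∩ O| ≤ k/2, it holds that f(C) ≤ 1/4 + 1/k; in particular f(C)/f(O) ≤ 1/4 + 1/k. -/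
lemma cast_div_two_mul_le_quarter {m k : ℕ} (hk : 0 < k) (hm : m ≤ k / 2) :
    (m : ℝ) / (2 * k) ≤ 1 / 4 := by
  have hm' : (m : ℝ) ≤ k / 2 := by
    calc (m : ℝ) ≤ ((k / 2 : ℕ) : ℝ) := by exact_mod_cast hm
      _ ≤ k / 2 := Nat.cast_div_le
  rw [div_le_div_iff₀ (by positivity) (by norm_num)]
  linarith

theorem tight_example_value_bound_general
    {U : Type*} [DecidableEq U]
    (k : ℕ) (hk : 2 ≤ k)
    (O : Finset U) (hO : O.card = k) (a b : U)
    (haO : a ∉ O) (hbO : b ∉ O)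
    (f : Finset U → ℝ)
    (hf_one : ∀ C : Finset U, (a ∈ C ∧ b ∉ C) ∨ (a ∉ C ∧ b ∈ C) →
      f C = (C ∩ O).card / (2 * (k : ℝ)) + 1 / (k : ℝ))
    (hf_none : ∀ C : Finset U, a ∉ C → b ∉ C → f C = (C ∩ O).card / (k : ℝ)) :
    f O = 1 ∧
      ∀ C : Finset U, ((a ∈ C ∧ b ∉ C) ∨ (a ∉ C ∧ b ∈ C)) →
        (C ∩ O).card ≤ k / 2 →
        f C ≤ 1/4 + 1/(k : ℝ) ∧ f C / f O ≤ 1/4 + 1/(k : ℝ) := by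
  have hk_pos : 0 < k := by omega
  have hfO : f O = 1 := by
    rw [hf_none O haO hbO, Finset.inter_self, hO]
    exact div_self (by positivity)
  refine ⟨hfO, fun C hC hcard => ?_⟩
  have hfC : f C ≤ 1/4 + 1/(k : ℝ) := by
    rw [hf_one C hC]
    linarith [cast_div_two_mul_le_quarter hk_pos hcard]
  exact ⟨hfC, by rwa [hfO, div_one]⟩

theorem tight_example_value_bound
    {U : Type*} [Fintype U] [DecidableEq U]
    (k : ℕ) (hk : 2 ≤ k) (hkeven : Even k)
    (O : Finset U) (hO : O.card = k) (a b : U)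
    (hab : a ≠ b) (haO : a ∉ O) (hbO : b ∉ O)
    (f : Finset U → ℝ)
    (hf_both : ∀ C : Finset U, a ∈ C → b ∈ C → f C = 0)
    (hf_one : ∀ C : Finset U, (a ∈ C ∧ b ∉ C) ∨ (a ∉ C ∧ b ∈ C) →
      f C = (C ∩ O).card / (2 * (k : ℝ)) + 1 / (k : ℝ))
    (hf_none : ∀ C : Finset U, a ∉ C → b ∉ C → f C = (C ∩ O).card / (k : ℝ)) :
    f O = 1 ∧
      ∀ C : Finset U, ((a ∈ C ∧ b ∉ C) ∨ (a ∉ C ∧ b ∈ C)) →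
        (C ∩ O).card ≤ k / 2 →
        f C ≤ 1/4 + 1/(k : ℝ) ∧ f C / f O ≤ 1/4 + 1/(k : ℝ) :=
  tight_example_value_bound_general k hk O hO a b haO hbO f hf_one hf_none
end
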